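/- arXiv:1102.1346 — 2 statements merged into one kernel-verified Lean document; each statement's English description precedes it below -/
import Mathlib

section
/- Let K be a field of characteristic zero, L a finite extension of K, and λ_1, ..., λ_m ∈ L nonzero. Fix a polynomial P(y) ∈ K[y] of degree m with roots λ_1,...,λ_m and leading coefficient p, and for each n define R_n = p^{d} Π_{j=1}^m F(λ_j^n) where F ∈ K[y] is a fixed polynomial of degree ≤ d. Then (R_n) takes values in K and satisfies a linear recurrence with constant coefficients in K. -/
/-!
Expanding the product, `∏ⱼ F(λⱼⁿ) = ∑_f (∏ⱼ F_{f j}) μ_fⁿ` is a generalized power sum over the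
monomials `μ_f = ∏ⱼ λⱼ^{f j}`, so it satisfies the linear recurrence over `L` whose characteristic
polynomial is `∏_f (X - μ_f)`. Its values lie in `K`, since `∏ⱼ G(λⱼ) = Res(P, G) / p^{deg G}` for
`G = F(Xⁿ)`. Finally, a recurrence over `L` satisfied by a `K`-valued sequence descends to one over
`K` of the same order: apply a `K`-linear functional `π : L → K` with `π 1 = 1`.
-/

open Polynomial

namespace LinearRecurrence

variable {R : Type*} [CommRing R]

def ofCharPoly (q : R[X]) : LinearRecurrence R :=
  ⟨q.natDegree, fun i => -q.coeff i⟩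

theorem charPoly_ofCharPoly {q : R[X]} (hq : q.Monic) : (ofCharPoly q).charPoly = q := by
  conv_rhs => rw [hq.as_sum]
  simp only [charPoly, ofCharPoly, ← C_mul_X_pow_eq_monomial, map_neg,
    Finset.sum_neg_distrib, sub_neg_eq_add, C_1, one_mul]
  exact congrArg _ (Fin.sum_univ_eq_sum_range (fun i => C (q.coeff i) * X ^ i) _)

theorem isSolution_sum_geom {ι : Type*} [Fintype ι] (E : LinearRecurrence R) (b μ : ι → R)
    (h : ∀ i, E.charPoly.IsRoot (μ i)) : E.IsSolution fun n => ∑ i, b i * μ i ^ n := by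
  have hsum : (fun n => ∑ i, b i * μ i ^ n) = ∑ i, b i • fun n => μ i ^ n := by
    funext n; simp [Finset.sum_apply]
  rw [is_sol_iff_mem_solSpace, hsum]
  exact Submodule.sum_mem _ fun i _ => Submodule.smul_mem _ _
    ((E.is_sol_iff_mem_solSpace _).1 ((E.geom_sol_iff_root_charPoly _).2 (h i)))

theorem IsSolution.const_mul {E : LinearRecurrence R} {u : ℕ → R} (h : E.IsSolution u) (c : R) :
    E.IsSolution fun n => c * u n := by
  intro n
  simp only [h n, Finset.mul_sum, mul_left_comm c]

theorem IsSolution.exists_eq_sum_Icc {E : LinearRecurrence R} {u : ℕ → R} (h : E.IsSolution u) :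
    ∃ s : ℕ → R, ∀ n, u (n + E.order) =
      ∑ i ∈ Finset.Icc 1 E.order, s i * u (n + E.order - i) := by
  classical
  let c : ℕ → R := fun j => if hj : j < E.order then E.coeffs ⟨j, hj⟩ else 0
  refine ⟨fun i => c (E.order - i), fun n => ?_⟩
  rw [h n]
  refine Finset.sum_bij (fun i _ => E.order - i) (fun i _ => ?_) (fun i _ j _ hij => ?_)
    (fun j hj => ?_) (fun i _ => ?_)
  · simp only [Finset.mem_Icc]; omega
  · exact Fin.ext (by omega)
  · rw [Finset.mem_Icc] at hj
    exact ⟨⟨E.order - j, by omega⟩, Finset.mem_univ _, by dsimp only; omega⟩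
  · dsimp only
    rw [Nat.sub_sub_self i.is_lt.le, show n + E.order - (E.order - i) = n + i by omega]
    simp [c]

theorem exists_isSolution_of_isSolution_algebraMap_comp {K L : Type*} [Field K] [CommRing L]
    [Nontrivial L] [Algebra K L] {E : LinearRecurrence L} {a : ℕ → K}
    (h : E.IsSolution (algebraMap K L ∘ a)) :
    ∃ E' : LinearRecurrence K, E'.order = E.order ∧ E'.IsSolution a := by
  obtain ⟨π, hπ⟩ := Module.Projective.exists_dual_eq_one K (one_ne_zero : (1 : L) ≠ 0)
  have hπa : ∀ k, π (algebraMap K L k) = k := fun k => by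
    rw [Algebra.algebraMap_eq_smul_one, map_smul, hπ, smul_eq_mul, mul_one]
  refine ⟨⟨E.order, fun i => π (E.coeffs i)⟩, rfl, fun n => ?_⟩
  have hterm : ∀ (x : L) (k : K), π (x * algebraMap K L k) = k * π x := fun x k => by
    rw [← Algebra.commutes, ← Algebra.smul_def, map_smul, smul_eq_mul]
  simpa [hπa, hterm, mul_comm] using congrArg π (h n)

end LinearRecurrence

theorem prod_eval_pow_eq_sum {R ι : Type*} [CommSemiring R] [Fintype ι] [DecidableEq ι]
    (G : R[X]) (l : ι → R) (n : ℕ) :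
    ∏ j, G.eval (l j ^ n) =
      ∑ f : ι → Fin (G.natDegree + 1), (∏ j, G.coeff (f j)) * (∏ j, l j ^ (f j : ℕ)) ^ n := by
  simp_rw [eval_eq_sum_range, ← Fin.sum_univ_eq_sum_range (fun i => G.coeff i * _ ^ i),
    Finset.prod_univ_sum, Fintype.piFinset_univ, Finset.prod_mul_distrib, ← Finset.prod_pow,
    ← pow_mul, mul_comm n]

theorem exists_linearRecurrence_isSolution_prod_eval_pow {R ι : Type*} [CommRing R]
    [Nontrivial R] [Fintype ι] (G : R[X]) (l : ι → R) :
    ∃ E : LinearRecurrence R, 0 < E.order ∧ E.IsSolution fun n => ∏ j, G.eval (l j ^ n) := by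
  classical
  let μ : (ι → Fin (G.natDegree + 1)) → R := fun f => ∏ j, l j ^ (f j : ℕ)
  let q := ∏ f, (X - C (μ f))
  have hq : q.Monic := monic_prod_of_monic _ _ fun f _ => monic_X_sub_C (μ f)
  refine ⟨LinearRecurrence.ofCharPoly q, ?_, ?_⟩
  · simp [LinearRecurrence.ofCharPoly, q]
  · simp_rw [prod_eval_pow_eq_sum]
    refine LinearRecurrence.isSolution_sum_geom _ _ μ fun f => ?_
    rw [LinearRecurrence.charPoly_ofCharPoly hq, IsRoot, eval_prod]
    exact Finset.prod_eq_zero (Finset.mem_univ f) (by simp)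

theorem exists_algebraMap_eq_prod_eval {K L ι : Type*} [Field K] [CommRing L] [IsDomain L]
    [Algebra K L] [Fintype ι] {P : K[X]} {c : K} (hc : c ≠ 0) {l : ι → L}
    (hP : P.map (algebraMap K L) = C (algebraMap K L c) * ∏ j, (X - C (l j))) (G : K[X]) :
    ∃ y : K, algebraMap K L y = ∏ j, (G.map (algebraMap K L)).eval (l j) := by
  have hc' : algebraMap K L c ≠ 0 := _root_.map_ne_zero _ |>.2 hc
  have hsplit : (P.map (algebraMap K L)).Splits :=
    hP ▸ (Splits.prod fun j _ => Splits.X_sub_C (l j)).C_mul _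
  have hroots : (P.map (algebraMap K L)).roots = Finset.univ.val.map l := by
    have := roots_multiset_prod_X_sub_C (Finset.univ.val.map l)
    rw [Multiset.map_map, ← Finset.prod_eq_multiset_prod, ← roots_C_mul _ hc'] at this
    exact hP ▸ this
  have hlc : (P.map (algebraMap K L)).leadingCoeff = algebraMap K L c := by
    rw [hP, leadingCoeff_mul, leadingCoeff_C,
      (monic_prod_of_monic _ _ fun j _ => monic_X_sub_C (l j)).leadingCoeff, mul_one]
  have hres := resultant_eq_prod_eval _ (G.map (algebraMap K L)) _ le_rfl hsplit
  rw [resultant_map_map, natDegree_map, natDegree_map, hroots, hlc, Multiset.map_map] at hres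
  refine ⟨resultant P G / c ^ G.natDegree, mul_left_cancel₀ (pow_ne_zero G.natDegree hc') ?_⟩
  rw [← map_pow, ← map_mul, mul_div_cancel₀ _ (pow_ne_zero _ hc), hres, map_pow]
  rfl

theorem symmetric_power_product_recurrent_general
    (K L : Type*) [Field K] [Field L] [Algebra K L]
    (m : ℕ) (l : Fin m → L)
    (p : K) (hp : p ≠ 0) (P : K[X])
    (hP : P.map (algebraMap K L) =
      Polynomial.C (algebraMap K L p) * ∏ j, (X - Polynomial.C (l j)))
    (d : ℕ) (F : K[X])
    (R : ℕ → L)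
    (hR : ∀ n : ℕ,
      R n = algebraMap K L p ^ d * ∏ j, (F.map (algebraMap K L)).eval (l j ^ n)) :
    ∃ a : ℕ → K, (∀ n, algebraMap K L (a n) = R n) ∧
      ∃ (e : ℕ) (s : ℕ → K), 0 < e ∧
        ∀ n : ℕ, a (n + e) = ∑ i ∈ Finset.Icc 1 e, s i * a (n + e - i) := by
  have hK (n : ℕ) : ∃ y : K, algebraMap K L y = ∏ j, (F.map (algebraMap K L)).eval (l j ^ n) := by
    simpa [Polynomial.map_comp] using exists_algebraMap_eq_prod_eval hp hP (F.comp (X ^ n))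
  choose y hy using hK
  have ha (n : ℕ) : algebraMap K L (p ^ d * y n) = R n := by simp [hR, hy]
  obtain ⟨E, hE0, hE⟩ :=
    exists_linearRecurrence_isSolution_prod_eval_pow (F.map (algebraMap K L)) l
  have hsol : E.IsSolution (algebraMap K L ∘ fun n => p ^ d * y n) := by
    convert hE.const_mul (algebraMap K L p ^ d) using 1
    funext n
    simp [ha, hR]
  obtain ⟨E', hord, hE'⟩ := LinearRecurrence.exists_isSolution_of_isSolution_algebraMap_comp hsol
  obtain ⟨s, hs⟩ := hE'.exists_eq_sum_Icc
  exact ⟨_, ha, E'.order, s, hord ▸ hE0, hs⟩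

/-- let `K` be a field of characteristic zero, `L` a finite extension, and
`P ∈ K[y]` a polynomial of degree `m` with leading coefficient `p` and roots
`λ_1, …, λ_m ∈ L`, all nonzero.  For a fixed `F ∈ K[y]` of degree `≤ d`, the sequence
`R_n = p^d · Π_j F(λ_j^n)` takes values in (the image of) `K` and satisfies a linear
recurrence with constant coefficients in `K`. -/
theorem symmetric_power_product_recurrent
    (K L : Type*) [Field K] [CharZero K] [Field L] [Algebra K L]
    [FiniteDimensional K L]
    (m : ℕ) (l : Fin m → L) (hl : ∀ j, l j ≠ 0)
    (p : K) (hp : p ≠ 0) (P : K[X]) (hm : P.natDegree = m)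
    (hP : P.map (algebraMap K L) =
      Polynomial.C (algebraMap K L p) * ∏ j, (X - Polynomial.C (l j)))
    (d : ℕ) (F : K[X]) (hF : F.natDegree ≤ d)
    (R : ℕ → L)
    (hR : ∀ n : ℕ,
      R n = algebraMap K L p ^ d * ∏ j, (F.map (algebraMap K L)).eval (l j ^ n)) :
    ∃ a : ℕ → K, (∀ n, algebraMap K L (a n) = R n) ∧
      ∃ (e : ℕ) (s : ℕ → K), 0 < e ∧
        ∀ n : ℕ, a (n + e) = ∑ i ∈ Finset.Icc 1 e, s i * a (n + e - i) :=
  symmetric_power_product_recurrent_general K L m l p hp P hP d F R hR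
end

section
/- Let p(z, x) = Σ_{(α,β)} c_{α,β} x^α z^β be a nonzero polynomial in z with Laurent-polynomial coefficients in r variables x = (x_1,...,x_r), and let λ(x) be a root of p (an algebraic function of x). For a weight vector ω ∈ ℚ^r, let V(ω) = v*(λ(ε_ω(x))) denote the valuation (lowest exponent in t) of λ after substituting x_i = t^{ω_i}. Then for each generic ω, the minimum min_{(α,β)} { α·ω + β V(ω) } over the support of p is attained at least twice; consequently, ω ↦ V(ω) is piecewise linear: there is a fan in ℝ^r such that V is linear on the interior of each maximal cone. -/
/-!
Substituting `x = t^ω` turns each monomial `c_{α,β} x^α z^β` of `p(λ, x) = 0` into a nonzero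
Hahn series of order `α·ω + β V(ω)`. These series sum to zero, so the lowest order among them
cannot be attained by a single term: its leading coefficient would survive in the sum. For a
generic `ω` two minimizing monomials `(α, β) ≠ (α', β')` must have `β ≠ β'`, and solving
`α·ω + β V = α'·ω + β' V` exhibits `V(ω)` as one of finitely many linear forms
`ω ↦ ((α' - α) / (β - β'))·ω`.
-/

namespace HahnSeries

theorem exists_ne_order_eq_of_sum_eq_zero {Γ R ι : Type*} [LinearOrder Γ] [Zero Γ]
    [AddCommMonoid R] {s : Finset ι} (hs : s.Nonempty) {g : ι → HahnSeries Γ R}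
    (hg : ∀ i ∈ s, g i ≠ 0) (hsum : ∑ i ∈ s, g i = 0) :
    ∃ i ∈ s, ∃ j ∈ s, i ≠ j ∧ (g i).order = (g j).order ∧
      ∀ k ∈ s, (g i).order ≤ (g k).order := by
  obtain ⟨i, hi, hmin⟩ := s.exists_min_image (fun k => (g k).order) hs
  suffices ∃ j ∈ s, i ≠ j ∧ (g i).order = (g j).order by
    obtain ⟨j, hj, hij, heq⟩ := this
    exact ⟨i, hi, j, hj, hij, heq, hmin⟩
  by_contra! hunique
  have hlt : ∀ j ∈ s, j ≠ i → (g i).order < (g j).order := fun j hj hji =>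
    (hmin j hj).lt_of_ne (hunique j hj (Ne.symm hji))
  have hcoeff : (∑ k ∈ s, g k).coeff (g i).order = (g i).coeff (g i).order := by
    rw [coeff_sum, Finset.sum_eq_single_of_mem i hi fun j hj hji =>
      coeff_eq_zero_of_lt_order (hlt j hj hji)]
  rw [hsum, coeff_zero, eq_comm, coeff_order_eq_zero] at hcoeff
  exact hg i hi hcoeff

theorem order_single_mul_pow {Γ R : Type*} [AddCommMonoid Γ] [LinearOrder Γ]
    [IsOrderedCancelAddMonoid Γ] [Semiring R] [NoZeroDivisors R] {a : Γ} {r : R} (hr : r ≠ 0)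
    {x : HahnSeries Γ R} (hx : x ≠ 0) (n : ℕ) :
    (single a r * x ^ n).order = a + n • x.order := by
  rw [order_mul (single_ne_zero hr) (pow_ne_zero n hx), order_single hr, order_pow]

end HahnSeries

section Tropical

variable {ι : Type*} [Fintype ι]

/-- The tropicalization `α·ω + β v` of the monomial `x^α z^β` at `x = t^ω`, `v*(z) = v`. -/
def tropicalMonomial (ω : ι → ℚ) (v : ℚ) (p : (ι → ℤ) × ℕ) : ℚ :=
  ∑ i, (p.1 i : ℚ) * ω i + p.2 * v

/-- The slope of the tropical root `v` forced by `p` and `q` attaining the same value. -/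
def tropicalSlope (p q : (ι → ℤ) × ℕ) : ι → ℚ :=
  fun i => ((q.1 i : ℚ) - p.1 i) / ((p.2 : ℚ) - q.2)

theorem eq_sum_tropicalSlope_mul {ω : ι → ℚ} {v : ℚ} {p q : (ι → ℤ) × ℕ} (hpq : p.2 ≠ q.2)
    (h : tropicalMonomial ω v p = tropicalMonomial ω v q) :
    v = ∑ i, tropicalSlope p q i * ω i := by
  have hd : (p.2 : ℚ) - q.2 ≠ 0 := sub_ne_zero.mpr (Nat.cast_injective.ne hpq)
  have hsum : ∑ i, tropicalSlope p q i * ω i =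
      (∑ i, (q.1 i : ℚ) * ω i - ∑ i, (p.1 i : ℚ) * ω i) / ((p.2 : ℚ) - q.2) := by
    rw [← Finset.sum_sub_distrib, Finset.sum_div]
    exact Finset.sum_congr rfl fun i _ => by unfold tropicalSlope; ring
  rw [hsum, eq_div_iff hd]
  unfold tropicalMonomial at h
  linarith

theorem snd_ne_of_tropicalMonomial_eq {ω : ι → ℚ} {v : ℚ} {p q : (ι → ℤ) × ℕ} (hpq : p ≠ q)
    (hω : p.1 ≠ q.1 → ∑ i, (p.1 i : ℚ) * ω i ≠ ∑ i, (q.1 i : ℚ) * ω i)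
    (h : tropicalMonomial ω v p = tropicalMonomial ω v q) : p.2 ≠ q.2 := by
  intro hβ
  have hα : p.1 = q.1 := by
    by_contra hα
    apply hω hα
    unfold tropicalMonomial at h
    rw [hβ] at h
    linarith
  exact hpq (Prod.ext hα hβ)

end Tropical

theorem tropical_root_valuation_piecewise_linear_general
    (F : Type*) [Field F] (r : ℕ)
    (S : Finset ((Fin r → ℤ) × ℕ)) (hS : S.Nonempty)
    (c : ((Fin r → ℤ) × ℕ) → F) (hc : ∀ p ∈ S, c p ≠ 0)
    (Generic : (Fin r → ℚ) → Prop)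
    (hGen : ∀ ω, Generic ω ↔
      ∀ a b : Fin r → ℤ, (∃ β, (a, β) ∈ S) → (∃ β, (b, β) ∈ S) → a ≠ b →
        (∑ i, (a i : ℚ) * ω i) ≠ ∑ i, (b i : ℚ) * ω i)
    (lam : (Fin r → ℚ) → HahnSeries ℚ F)
    (hroot : ∀ ω, Generic ω → lam ω ≠ 0 ∧
      ∑ p ∈ S,
        HahnSeries.single (∑ i, (p.1 i : ℚ) * ω i) (c p) * lam ω ^ p.2 = 0)
    (V : (Fin r → ℚ) → ℚ) (hV : ∀ ω, V ω = (lam ω).order) :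
    (∀ ω, Generic ω → ∃ p ∈ S, ∃ q ∈ S, p ≠ q ∧
      ((∑ i, (p.1 i : ℚ) * ω i) + p.2 * V ω =
        (∑ i, (q.1 i : ℚ) * ω i) + q.2 * V ω) ∧
      ∀ s ∈ S, (∑ i, (p.1 i : ℚ) * ω i) + p.2 * V ω ≤
        (∑ i, (s.1 i : ℚ) * ω i) + s.2 * V ω) ∧
    ∃ W : Finset (Fin r → ℚ), ∀ ω, Generic ω →
      ∃ w ∈ W, V ω = ∑ i, w i * ω i := by
  have hmin : ∀ ω, Generic ω → ∃ p ∈ S, ∃ q ∈ S, p ≠ q ∧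
      tropicalMonomial ω (V ω) p = tropicalMonomial ω (V ω) q ∧
      ∀ s ∈ S, tropicalMonomial ω (V ω) p ≤ tropicalMonomial ω (V ω) s := by
    intro ω hω
    obtain ⟨hlam, hsum⟩ := hroot ω hω
    have horder : ∀ p ∈ S, (HahnSeries.single (∑ i, (p.1 i : ℚ) * ω i) (c p) *
        lam ω ^ p.2).order = tropicalMonomial ω (V ω) p := fun p hp => by
      rw [HahnSeries.order_single_mul_pow (hc p hp) hlam, hV, nsmul_eq_mul, tropicalMonomial]
    obtain ⟨p, hp, q, hq, hpq, heq, hle⟩ := HahnSeries.exists_ne_order_eq_of_sum_eq_zero hS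
      (fun p hp => mul_ne_zero (HahnSeries.single_ne_zero (hc p hp)) (pow_ne_zero _ hlam)) hsum
    rw [horder p hp, horder q hq] at heq
    exact ⟨p, hp, q, hq, hpq, heq, fun s hs => horder p hp ▸ horder s hs ▸ hle s hs⟩
  refine ⟨hmin, (S ×ˢ S).image fun pq => tropicalSlope pq.1 pq.2, fun ω hω => ?_⟩
  obtain ⟨p, hp, q, hq, hpq, heq, -⟩ := hmin ω hω
  have hβ := snd_ne_of_tropicalMonomial_eq hpq
    ((hGen ω).mp hω p.1 q.1 ⟨p.2, hp⟩ ⟨q.2, hq⟩) heq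
  exact ⟨_, Finset.mem_image_of_mem _ (Finset.mk_mem_product hp hq),
    eq_sum_tropicalSlope_mul hβ heq⟩

/-- tropicalization of an algebraic equation: let
`p(z,x) = Σ_{(α,β) ∈ S} c_{α,β} x^α z^β` and let `λ(ω)` be, for each generic weight
`ω ∈ ℚ^r` (generic: `ω` separates the distinct exponents `α` occurring in `S`), a
nonzero Puiseux series in `t` which is a root of `p` after the substitution
`x_i = t^{ω_i}`.  Write `V(ω)` for the valuation (lowest exponent) of `λ(ω)`.  Then for
each generic `ω` the minimum `min_{(α,β) ∈ S} (α·ω + β V(ω))` is attained at least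
twice; consequently `V` is piecewise linear on generic weights, taking values among
finitely many rational linear functions of `ω`. -/
theorem tropical_root_valuation_piecewise_linear
    (F : Type*) [Field F] [CharZero F] (r : ℕ)
    (S : Finset ((Fin r → ℤ) × ℕ)) (hS : S.Nonempty)
    (c : ((Fin r → ℤ) × ℕ) → F) (hc : ∀ p ∈ S, c p ≠ 0)
    (Generic : (Fin r → ℚ) → Prop)
    (hGen : ∀ ω, Generic ω ↔
      ∀ a b : Fin r → ℤ, (∃ β, (a, β) ∈ S) → (∃ β, (b, β) ∈ S) → a ≠ b →
        (∑ i, (a i : ℚ) * ω i) ≠ ∑ i, (b i : ℚ) * ω i)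
    (lam : (Fin r → ℚ) → HahnSeries ℚ F)
    (hroot : ∀ ω, Generic ω → lam ω ≠ 0 ∧
      ∑ p ∈ S,
        HahnSeries.single (∑ i, (p.1 i : ℚ) * ω i) (c p) * lam ω ^ p.2 = 0)
    (V : (Fin r → ℚ) → ℚ) (hV : ∀ ω, V ω = (lam ω).order) :
    (∀ ω, Generic ω → ∃ p ∈ S, ∃ q ∈ S, p ≠ q ∧
      ((∑ i, (p.1 i : ℚ) * ω i) + p.2 * V ω =
        (∑ i, (q.1 i : ℚ) * ω i) + q.2 * V ω) ∧
      ∀ s ∈ S, (∑ i, (p.1 i : ℚ) * ω i) + p.2 * V ω ≤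
        (∑ i, (s.1 i : ℚ) * ω i) + s.2 * V ω) ∧
    ∃ W : Finset (Fin r → ℚ), ∀ ω, Generic ω →
      ∃ w ∈ W, V ω = ∑ i, w i * ω i :=
  tropical_root_valuation_piecewise_linear_general F r S hS c hc Generic hGen lam hroot V hV
end
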